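/- For all integers i, k ≥ 0 and n ≥ 2: ((a(i,k) : ℝ) − L(n,k)·b(i,k))² < L(n,k). -/
import Mathlib


/-- Pell numbers: P 0 = 0, P 1 = 1, P (m+2) = 2·P (m+1) + P m. -/
def pell : ℕ → ℕ
  | 0 => 0
  | 1 => 1
  | m + 2 => 2 * pell (m + 1) + pell m

/-- Half-companion Pell numbers: H 0 = 1, H 1 = 1, H (m+2) = 2·H (m+1) + H m. -/
def hpell : ℕ → ℕ
  | 0 => 1
  | 1 => 1
  | m + 2 => 2 * hpell (m + 1) + hpell m

/-- The solution of x 0 = x0, x 1 = x1, x (i+2) = 2n·x (i+1) − x i. -/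
def rec2 (n : ℕ) (x0 x1 : ℤ) : ℕ → ℤ
  | 0 => x0
  | 1 => x1
  | i + 2 => 2 * n * rec2 n x0 x1 (i + 1) - rec2 n x0 x1 i

/-- a i : a 0 = 1, a 1 = n. -/
def sa (n : ℕ) : ℕ → ℤ := rec2 n 1 n
/-- b i : b 0 = 0, b 1 = 1. -/
def sb (n : ℕ) : ℕ → ℤ := rec2 n 0 1
/-- c i : c 0 = 1, c 1 = 2n+1. -/
def sc (n : ℕ) : ℕ → ℤ := rec2 n 1 (2 * n + 1)
/-- d i : d 0 = 1, d 1 = 1. -/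
def sd (n : ℕ) : ℕ → ℤ := rec2 n 1 1

/-- X(i,k) = H(2k)·(a i + b i) + 2·P(2k)·n·(b i). -/
def XX (n i k : ℕ) : ℤ :=
  (hpell (2*k) : ℤ) * (sa n i + sb n i) + 2 * (pell (2*k) : ℤ) * n * sb n i

/-- Δ(i,k) = P(2k)·(a i + b i) + H(2k)·n·(b i). -/
def DD (n i k : ℕ) : ℤ :=
  (pell (2*k) : ℤ) * (sa n i + sb n i) + (hpell (2*k) : ℤ) * n * sb n i

/-- a(i,k) = (X(i,k) + (a i − b i))/2. -/
def aik (n i k : ℕ) : ℤ := (XX n i k + (sa n i - sb n i)) / 2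
/-- b(i,k) = (X(i,k) − (a i − b i))/2. -/
def bik (n i k : ℕ) : ℤ := (XX n i k - (sa n i - sb n i)) / 2
/-- c(i,k) = X(i,k) + Δ(i,k). -/
def cik (n i k : ℕ) : ℤ := XX n i k + DD n i k
/-- d(i,k) = X(i,k) − Δ(i,k). -/
def dik (n i k : ℕ) : ℤ := XX n i k - DD n i k

/-- √(n²−1). -/
noncomputable def sqn (n : ℕ) : ℝ := Real.sqrt ((n : ℝ)^2 - 1)

/-- ω = n + √(n²−1). -/
noncomputable def om (n : ℕ) : ℝ := n + sqn n

/-- L(n,k) = (H(2k)·(√(n²−1)+1) + 2n·P(2k) + (√(n²−1)−1)) /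
(H(2k)·(√(n²−1)+1) + 2n·P(2k) − (√(n²−1)−1)). -/
noncomputable def L (n k : ℕ) : ℝ :=
  ((hpell (2*k) : ℝ) * (sqn n + 1) + 2*n*(pell (2*k) : ℝ) + (sqn n - 1)) /
  ((hpell (2*k) : ℝ) * (sqn n + 1) + 2*n*(pell (2*k) : ℝ) - (sqn n - 1))

/-- S(n,0) = (√(n²−1)+1+n)/(√(n²−1)+1−n); for k ≥ 1,
S(n,k) = ((√(n²−1)+1)·P(2k+1) + n·H(2k+1)) / ((√(n²−1)+1)·P(2k−1) + n·H(2k−1)). -/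
noncomputable def S (n k : ℕ) : ℝ :=
  if k = 0 then (sqn n + 1 + n) / (sqn n + 1 - n)
  else ((sqn n + 1) * (pell (2*k+1) : ℝ) + n * (hpell (2*k+1) : ℝ)) /
       ((sqn n + 1) * (pell (2*k-1) : ℝ) + n * (hpell (2*k-1) : ℝ))

lemma pell_hpell_step (m : ℕ) :
    pell (m+1) = hpell m + pell m ∧ hpell (m+1) = hpell m + 2 * pell m := by
  induction m with
  | zero => simp [pell, hpell]
  | succ m ih =>
    obtain ⟨h1, h2⟩ := ih
    constructor
    · show 2 * pell (m+1) + pell m = hpell (m+1) + pell (m+1)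
      omega
    · show 2 * hpell (m+1) + hpell m = hpell (m+1) + 2 * pell (m+1)
      omega

lemma hpell_sq (m : ℕ) : (hpell m : ℤ)^2 = 2 * (pell m : ℤ)^2 + (-1)^m := by
  induction m with
  | zero => simp [pell, hpell]
  | succ m ih =>
    obtain ⟨h1, h2⟩ := pell_hpell_step m
    rw [h1, h2]
    push_cast
    linear_combination (-1 : ℤ) * ih

lemma hpell_sq_even (k : ℕ) : (hpell (2*k) : ℤ)^2 = 2 * (pell (2*k) : ℤ)^2 + 1 := by
  have h := hpell_sq (2*k)
  simpa [pow_mul] using h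

lemma hpell_odd (m : ℕ) : Odd (hpell m) := by
  induction m with
  | zero => exact ⟨0, rfl⟩
  | succ m ih =>
    rw [(pell_hpell_step m).2]
    obtain ⟨t, ht⟩ := ih
    exact ⟨t + pell m, by omega⟩

lemma sab_step (n : ℕ) (i : ℕ) :
    sa n (i+1) = n * sa n i + ((n:ℤ)^2 - 1) * sb n i ∧
    sb n (i+1) = sa n i + n * sb n i := by
  induction i with
  | zero => simp [sa, sb, rec2]
  | succ i ih =>
    obtain ⟨h1, h2⟩ := ih
    constructor
    · show 2 * (n:ℤ) * sa n (i+1) - sa n i = _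
      linear_combination (n:ℤ) * h1 - ((n:ℤ)^2 - 1) * h2
    · show 2 * (n:ℤ) * sb n (i+1) - sb n i = _
      linear_combination -h1 + (n:ℤ) * h2

lemma sab_pos (n : ℕ) (hn : 2 ≤ n) (i : ℕ) : 1 ≤ sa n i ∧ 0 ≤ sb n i := by
  induction i with
  | zero => simp [sa, sb, rec2]
  | succ i ih =>
    obtain ⟨ha, hb⟩ := ih
    obtain ⟨h1, h2⟩ := sab_step n i
    have hn' : (2:ℤ) ≤ n := by exact_mod_cast hn
    constructor
    · rw [h1]
      have e1 : (0:ℤ) ≤ ((n:ℤ)^2 - 1) * sb n i :=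
        mul_nonneg (by nlinarith) hb
      nlinarith
    · rw [h2]; nlinarith

lemma sab_pell (n : ℕ) (i : ℕ) :
    (sa n i)^2 - ((n:ℤ)^2 - 1) * (sb n i)^2 = 1 := by
  induction i with
  | zero => simp [sa, sb, rec2]
  | succ i ih =>
    obtain ⟨h1, h2⟩ := sab_step n i
    rw [h1, h2]
    linear_combination ih

lemma denom_pos (H P N s : ℝ) (hH1 : 1 ≤ H) (hP0 : 0 ≤ P) (hN2 : 2 ≤ N) (hs0 : 0 ≤ s) :
    0 < H * (s + 1) + 2*N*P - (s - 1) := by nlinarith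

lemma key_ineq (A B H P N s : ℝ) (hA : A^2 - (N^2-1)*B^2 = 1) (hA1 : 1 ≤ A) (hB0 : 0 ≤ B)
    (hH : H^2 = 2*P^2 + 1) (hH1 : 1 ≤ H) (hP0 : 0 ≤ P) (hN2 : 2 ≤ N)
    (hs_sq : s^2 = N^2 - 1) (hs0 : 0 ≤ s) :
    4 * (H + N*P)^2 * (A - B*s)^2
      < (H * (s + 1) + 2*N*P + (s - 1)) * (H * (s + 1) + 2*N*P - (s - 1)) := by
  have hs1 : (1:ℝ) < s := by nlinarith
  have h1 : (A - B*s) * (A + B*s) = 1 := by linear_combination hA - B^2 * hs_sq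
  have hABs : (1:ℝ) ≤ A + B*s := by nlinarith [mul_nonneg hB0 hs0]
  have hE0 : 0 < A - B*s := by nlinarith
  have hE1 : A - B*s ≤ 1 := by
    nlinarith [mul_nonneg hE0.le (by linarith : (0:ℝ) ≤ A + B*s - 1)]
  have hE2 : (A - B*s)^2 ≤ 1 := by nlinarith
  have hfacid : (H * (s + 1) + 2*N*P + (s - 1)) * (H * (s + 1) + 2*N*P - (s - 1))
      - 4 * (H + N*P)^2 = 2 * (s - 1) * (P^2 * (s + 3) + 2*N*P*H + 2) := by
    linear_combination (s^2 + 2*s - 3) * hH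
  have hfac : 0 < P^2 * (s + 3) + 2*N*P*H + 2 := by
    nlinarith [mul_nonneg (sq_nonneg P) (by linarith : (0:ℝ) ≤ s + 3),
      mul_nonneg (mul_nonneg (by linarith : (0:ℝ) ≤ N) hP0) (by linarith : (0:ℝ) ≤ H)]
  have key2 : 4 * (H + N*P)^2
      < (H * (s + 1) + 2*N*P + (s - 1)) * (H * (s + 1) + 2*N*P - (s - 1)) := by
    nlinarith [mul_pos (by linarith : (0:ℝ) < s - 1) hfac]
  have hmono : 4 * (H + N*P)^2 * (A - B*s)^2 ≤ 4 * (H + N*P)^2 := by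
    nlinarith [mul_nonneg (by positivity : (0:ℝ) ≤ 4 * (H + N*P)^2)
      (by linarith : (0:ℝ) ≤ 1 - (A - B*s)^2)]
  linarith

theorem stmt_7 (n i k : ℕ) (hn : 2 ≤ n) :
    ((aik n i k : ℝ) - L n k * (bik n i k : ℝ)) ^ 2 < L n k := by
  obtain ⟨haZ, hbZ⟩ := sab_pos n hn i
  have hpellZ := sab_pell n i
  have hHZ := hpell_sq_even k
  obtain ⟨t, ht⟩ := hpell_odd (2*k)
  have htZ : (hpell (2*k) : ℤ) = 2*t + 1 := by exact_mod_cast ht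
  have hdvd1 : (2:ℤ) ∣ XX n i k + (sa n i - sb n i) :=
    ⟨t * (sa n i + sb n i) + (pell (2*k) : ℤ) * n * sb n i + sa n i, by
      unfold XX; rw [htZ]; ring⟩
  have hdvd2 : (2:ℤ) ∣ XX n i k - (sa n i - sb n i) :=
    ⟨t * (sa n i + sb n i) + (pell (2*k) : ℤ) * n * sb n i + sb n i, by
      unfold XX; rw [htZ]; ring⟩
  have ha2 : 2 * aik n i k = XX n i k + (sa n i - sb n i) := by
    unfold aik; exact Int.mul_ediv_cancel' hdvd1
  have hb2 : 2 * bik n i k = XX n i k - (sa n i - sb n i) := by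
    unfold bik; exact Int.mul_ediv_cancel' hdvd2
  have hXXR : ((XX n i k : ℤ) : ℝ)
      = (hpell (2*k) : ℝ) * (((sa n i : ℤ):ℝ) + ((sb n i : ℤ):ℝ))
        + 2 * (pell (2*k) : ℝ) * (n:ℝ) * ((sb n i : ℤ):ℝ) := by
    unfold XX; push_cast; ring
  have haR0 : 2 * ((aik n i k : ℤ):ℝ)
      = ((XX n i k : ℤ):ℝ) + (((sa n i : ℤ):ℝ) - ((sb n i : ℤ):ℝ)) := by
    exact_mod_cast congrArg (fun z : ℤ => (z:ℝ)) ha2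
  have hbR0 : 2 * ((bik n i k : ℤ):ℝ)
      = ((XX n i k : ℤ):ℝ) - (((sa n i : ℤ):ℝ) - ((sb n i : ℤ):ℝ)) := by
    exact_mod_cast congrArg (fun z : ℤ => (z:ℝ)) hb2
  rw [hXXR] at haR0 hbR0
  have hA : ((sa n i : ℤ):ℝ)^2 - ((n:ℝ)^2 - 1) * ((sb n i : ℤ):ℝ)^2 = 1 := by
    exact_mod_cast hpellZ
  have hA1 : (1:ℝ) ≤ ((sa n i : ℤ):ℝ) := by exact_mod_cast haZ
  have hB0 : (0:ℝ) ≤ ((sb n i : ℤ):ℝ) := by exact_mod_cast hbZ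
  have hH : ((hpell (2*k)):ℝ)^2 = 2 * ((pell (2*k)):ℝ)^2 + 1 := by exact_mod_cast hHZ
  have hH1 : (1:ℝ) ≤ ((hpell (2*k)):ℝ) := by
    have h : 1 ≤ hpell (2*k) := by omega
    exact_mod_cast h
  have hP0 : (0:ℝ) ≤ ((pell (2*k)):ℝ) := by positivity
  have hN2 : (2:ℝ) ≤ (n:ℝ) := by exact_mod_cast hn
  have hs_sq : sqn n ^ 2 = (n:ℝ)^2 - 1 := Real.sq_sqrt (by nlinarith [hN2])
  have hs0 : (0:ℝ) ≤ sqn n := Real.sqrt_nonneg _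
  set A := ((sa n i : ℤ):ℝ) with hAdef
  set B := ((sb n i : ℤ):ℝ) with hBdef
  set H := ((hpell (2*k)):ℝ) with hHdef
  set P := ((pell (2*k)):ℝ) with hPdef
  set N := (n:ℝ) with hNdef
  set s := sqn n with hsdef
  have hL : L n k = (H * (s + 1) + 2*N*P + (s - 1)) / (H * (s + 1) + 2*N*P - (s - 1)) := rfl
  have hD : 0 < H * (s + 1) + 2*N*P - (s - 1) := denom_pos H P N s hH1 hP0 hN2 hs0
  have hLD : L n k * (H * (s + 1) + 2*N*P - (s - 1)) = H * (s + 1) + 2*N*P + (s - 1) := by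
    rw [hL]; field_simp
  have hnum : 2 * ((aik n i k : ℤ):ℝ) * (H * (s + 1) + 2*N*P - (s - 1))
      - 2 * ((bik n i k : ℤ):ℝ) * (H * (s + 1) + 2*N*P + (s - 1))
      = 4 * (H + N*P) * (A - B*s) := by
    linear_combination (H * (s + 1) + 2*N*P - (s - 1)) * haR0
      - (H * (s + 1) + 2*N*P + (s - 1)) * hbR0
  have hval : ((aik n i k : ℤ):ℝ) - L n k * ((bik n i k : ℤ):ℝ)
      = 2 * (H + N*P) * (A - B*s) / (H * (s + 1) + 2*N*P - (s - 1)) := by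
    rw [eq_div_iff hD.ne']
    linear_combination hnum / 2 - ((bik n i k : ℤ):ℝ) * hLD
  have main := key_ineq A B H P N s hA hA1 hB0 hH hH1 hP0 hN2 hs_sq hs0
  rw [hval, hL, div_pow, div_lt_div_iff₀ (pow_pos hD 2) hD]
  calc (2 * (H + N*P) * (A - B*s))^2 * (H * (s + 1) + 2*N*P - (s - 1))
      = (4 * (H + N*P)^2 * (A - B*s)^2) * (H * (s + 1) + 2*N*P - (s - 1)) := by ring
    _ < ((H * (s + 1) + 2*N*P + (s - 1)) * (H * (s + 1) + 2*N*P - (s - 1)))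
        * (H * (s + 1) + 2*N*P - (s - 1)) := by
        exact mul_lt_mul_of_pos_right main hD
    _ = (H * (s + 1) + 2*N*P + (s - 1)) * (H * (s + 1) + 2*N*P - (s - 1))^2 := by ring
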